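/- Let G_D = diag(1/m₁, m₁ω₁², 1/m₂, m₂ω₂²)-type Hamiltonian matrix for two oscillators, specifically G_D = diag(m₁ω₁², 1/m₁, m₂ω₂², 1/m₂) ∈ ℝ^{4×4} (embedded as the top-left block of a 6×6 matrix with zeros elsewhere), and let P₁ = [aI₂; bI₂; 0₂] and P₂ = [eI₂, 0; fI₂, 0; 0₂, I₂] with (a,b), (e,f) orthonormal vectors in ℝ², ab ≠ 0 wherever needed. Then P₁ᵀ G_D P₂ = 0 if and only if m₁ = m₂ and ω₁ = ω₂. -/
import Mathlib


open Matrix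

theorem dark_mode_iff_equal_oscillators
    (m1 m2 w1 w2 a b e f : ℝ)
    (hm1 : 0 < m1) (hm2 : 0 < m2) (hw1 : 0 < w1) (hw2 : 0 < w2)
    (hab : a ^ 2 + b ^ 2 = 1) (hef : e ^ 2 + f ^ 2 = 1) (horth : a * e + b * f = 0)
    (ha : a ≠ 0) (hb : b ≠ 0) (he : e ≠ 0) (hf : f ≠ 0) :
    ((!![a, 0; 0, a; b, 0; 0, b; 0, 0; 0, 0] : Matrix (Fin 6) (Fin 2) ℝ)ᵀ *
       (!![m1 * w1 ^ 2, 0, 0, 0, 0, 0;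
           0, 1 / m1, 0, 0, 0, 0;
           0, 0, m2 * w2 ^ 2, 0, 0, 0;
           0, 0, 0, 1 / m2, 0, 0;
           0, 0, 0, 0, 0, 0;
           0, 0, 0, 0, 0, 0] : Matrix (Fin 6) (Fin 6) ℝ) *
       (!![e, 0, 0, 0; 0, e, 0, 0; f, 0, 0, 0; 0, f, 0, 0;
           0, 0, 1, 0; 0, 0, 0, 1] : Matrix (Fin 6) (Fin 4) ℝ) = 0) ↔
      (m1 = m2 ∧ w1 = w2) := by
  have hT : (!![a, 0; 0, a; b, 0; 0, b; 0, 0; 0, 0] : Matrix (Fin 6) (Fin 2) ℝ)ᵀ =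
      !![a, 0, b, 0, 0, 0; 0, a, 0, b, 0, 0] := by
    ext i j; fin_cases i <;> fin_cases j <;> rfl
  rw [hT]
  have hae : a * e = -(b * f) := by linarith
  have hbf : b * f ≠ 0 := mul_ne_zero hb hf
  have hm1' : m1 ≠ 0 := ne_of_gt hm1
  have hm2' : m2 ≠ 0 := ne_of_gt hm2
  constructor
  · intro h
    have h00 := congrFun (congrFun h 0) 0
    have h11 := congrFun (congrFun h 1) 1
    simp [Matrix.mul_apply, Fin.sum_univ_succ, Matrix.cons_val_succ,
      Fin.sum_univ_zero] at h00 h11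
    have hm : m1 = m2 := by
      have key : b * f * (m1⁻¹ - m2⁻¹) = 0 := by
        linear_combination m1⁻¹ * hae - h11
      have h' : m1⁻¹ - m2⁻¹ = 0 := by
        rcases mul_eq_zero.mp key with h' | h'
        · exact absurd h' hbf
        · exact h'
      field_simp at h'
      linarith
    refine ⟨hm, ?_⟩
    subst hm
    have key : b * f * (m1 * w2 ^ 2 - m1 * w1 ^ 2) = 0 := by
      linear_combination h00 - (m1 * w1 ^ 2) * hae
    rcases mul_eq_zero.mp key with h' | h'
    · exact absurd h' hbf
    · have h2 : w2 ^ 2 = w1 ^ 2 :=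
        mul_left_cancel₀ hm1' (by linarith)
      exact le_antisymm (by nlinarith) (by nlinarith)
  · rintro ⟨hm, hw⟩
    subst hm; subst hw
    ext i j
    fin_cases i <;> fin_cases j <;>
      simp [Matrix.mul_apply, Fin.sum_univ_succ, Matrix.cons_val_succ,
        Fin.sum_univ_zero] <;>
      first
        | linear_combination (m1 * w1 ^ 2) * hae
        | linear_combination m1⁻¹ * hae
        | linear_combination (m1⁻¹ - m1 * w1 ^ 2) * hae
        | linear_combination (m1⁻¹ + m1 * w1 ^ 2) * hae
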